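/- Let G be a strongly connected signed digraph with mirror Laplacian L̂ = (W·L + Lᵀ·W)/2. Then G is structurally unbalanced if and only if the null space of L̂ is trivial, i.e., L̂·x = 0 implies x = 0 for x ∈ ℝⁿ. -/

import Mathlib

/-! Write `w i = det L̄_ii`. Strong connectivity makes every `w i` positive (along the deformation
`Δ − tĀ`, `0 ≤ t ≤ 1`, the principal minors stay nonsingular by a maximum principle) and makes
`ker L̄` the constant vectors, so the columns of `adj L̄` are constant and `wᵀ L̄ = 0`. This balance
of weighted in- and out-degrees gives `2 xᵀ L̂ x = Φ_e(x) = Σ w_i |a_ij| (x_i − sgn(a_ij) x_j)²`,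
so `L̂` is positive semidefinite and its kernel consists of the `x` with `x_i = sgn(a_ij) x_j` on
every edge. Such an `x ≠ 0` has constant `|x|` along paths, and `x / |x|` is a gauge transformation
balancing `G`. -/

open Matrix BigOperators Filter

/-- In-degree of node `i`: sum of absolute values of the `i`-th row of `A`. -/
noncomputable def inDeg {n : ℕ} (A : Matrix (Fin n) (Fin n) ℝ) (i : Fin n) : ℝ := ∑ j, |A i j|

/-- Laplacian `L = Δ − A` of the signed digraph with adjacency matrix `A`. -/
noncomputable def lapOf {n : ℕ} (A : Matrix (Fin n) (Fin n) ℝ) : Matrix (Fin n) (Fin n) ℝ :=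
  Matrix.diagonal (inDeg A) - A

/-- Laplacian `L̄ = Δ − Ā` of the induced unsigned digraph. -/
noncomputable def lapBar {n : ℕ} (A : Matrix (Fin n) (Fin n) ℝ) : Matrix (Fin n) (Fin n) ℝ :=
  Matrix.diagonal (inDeg A) - Matrix.of (fun i j => |A i j|)

/-- `det(L̄_ii)`: determinant of `L̄` with its `i`-th row and column removed. -/
noncomputable def minorDet {n : ℕ} (A : Matrix (Fin n) (Fin n) ℝ) (i : Fin n) : ℝ :=
  Matrix.det ((lapBar A).submatrix (fun k : {j : Fin n // j ≠ i} => (k : Fin n))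
    (fun k : {j : Fin n // j ≠ i} => (k : Fin n)))

/-- `W = diag(det(L̄_11), …, det(L̄_nn))`. -/
noncomputable def Wmat {n : ℕ} (A : Matrix (Fin n) (Fin n) ℝ) : Matrix (Fin n) (Fin n) ℝ :=
  Matrix.diagonal (minorDet A)

/-- Mirror adjacency matrix `Â = (W·A + Aᵀ·W)/2`. -/
noncomputable def mirrorAdj {n : ℕ} (A : Matrix (Fin n) (Fin n) ℝ) : Matrix (Fin n) (Fin n) ℝ :=
  (1/2 : ℝ) • (Wmat A * A + Aᵀ * Wmat A)

/-- Mirror Laplacian `L̂ = (W·L + Lᵀ·W)/2`. -/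
noncomputable def mirrorLap {n : ℕ} (A : Matrix (Fin n) (Fin n) ℝ) : Matrix (Fin n) (Fin n) ℝ :=
  (1/2 : ℝ) • (Wmat A * lapOf A + (lapOf A)ᵀ * Wmat A)

/-- `(j, i)` is a directed edge when `a_ij ≠ 0`; strong connectivity: a directed
path between every ordered pair of distinct nodes. -/
def StronglyConnected {n : ℕ} (A : Matrix (Fin n) (Fin n) ℝ) : Prop :=
  ∀ i j : Fin n, i ≠ j → Relation.TransGen (fun u v => A v u ≠ 0) i j

/-- `σ` is the diagonal of a gauge transformation: each entry is `±1`. -/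
def IsGauge {n : ℕ} (σ : Fin n → ℝ) : Prop := ∀ i, σ i = 1 ∨ σ i = -1

/-- Structural balance: there is a gauge transformation `D = diag σ` with all entries
of `D·A·D` (entrywise `σ i * A i j * σ j`) nonnegative. -/
def StructBalanced {n : ℕ} (A : Matrix (Fin n) (Fin n) ℝ) : Prop :=
  ∃ σ : Fin n → ℝ, IsGauge σ ∧ ∀ i j, 0 ≤ σ i * A i j * σ j

/-- Improved Laplacian potential function
`Φ_e(x) = Σ_i Σ_j det(L̄_ii)·|a_ij|·(x_i − sgn(a_ij)·x_j)²`. -/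
noncomputable def PhiE {n : ℕ} (A : Matrix (Fin n) (Fin n) ℝ) (x : Fin n → ℝ) : ℝ :=
  ∑ i, ∑ j, minorDet A i * |A i j| * (x i - Real.sign (A i j) * x j) ^ 2

lemma Real.abs_sign_of_ne_zero {r : ℝ} (h : r ≠ 0) : |Real.sign r| = 1 := by
  rcases Real.sign_apply_eq_of_ne_zero r h with h | h <;> simp [h]

lemma Real.sign_mul_self (r : ℝ) : Real.sign r * r = |r| := by
  rcases lt_trichotomy r 0 with h | rfl | h
  · rw [Real.sign_of_neg h, abs_of_neg h]; ring
  · simp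
  · rw [Real.sign_of_pos h, abs_of_pos h]; ring

lemma abs_mul_sub_sign_mul_sq (a x y : ℝ) :
    |a| * (x - Real.sign a * y) ^ 2 = 2 * (|a| * x ^ 2 - a * x * y) + |a| * (y ^ 2 - x ^ 2) := by
  rcases lt_trichotomy a 0 with h | rfl | h
  · rw [Real.sign_of_neg h, abs_of_neg h]; ring
  · simp
  · rw [Real.sign_of_pos h, abs_of_pos h]; ring

lemma Matrix.submatrix_ne_mulVec_apply {ι R : Type*} [Fintype ι] [DecidableEq ι]
    [NonUnitalNonAssocSemiring R] (M : Matrix ι ι R) {i : ι}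
    (v : {j : ι // j ≠ i} → R) (k : {j : ι // j ≠ i}) :
    (M.submatrix (Subtype.val : {j : ι // j ≠ i} → ι) Subtype.val *ᵥ v) k
      = (M *ᵥ fun j => if h : j = i then 0 else v ⟨j, h⟩) k := by
  simp only [mulVec, dotProduct, Fintype.sum_eq_add_sum_subtype_ne _ i, dite_true, mul_zero,
    zero_add, submatrix_apply]
  exact Finset.sum_congr rfl fun l _ => by rw [dif_neg l.2]

lemma Matrix.adjugate_apply_self_eq_det_submatrix_ne {R : Type*} [CommRing R] {m : ℕ}
    (M : Matrix (Fin (m + 1)) (Fin (m + 1)) R) (i : Fin (m + 1)) :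
    M.adjugate i i = (M.submatrix (Subtype.val : {j // j ≠ i} → Fin (m + 1)) Subtype.val).det := by
  rw [adjugate_fin_succ_eq_det_submatrix, (Even.add_self (i : ℕ)).neg_one_pow, one_mul,
    ← det_submatrix_equiv_self (finSuccAboveEquiv i)]
  rfl

section Laplacians

variable {n : ℕ} (A : Matrix (Fin n) (Fin n) ℝ)

noncomputable def lapBarHomotopy (t : ℝ) : Matrix (Fin n) (Fin n) ℝ :=
  diagonal (inDeg A) - t • of fun i j => |A i j|

lemma lapBarHomotopy_one : lapBarHomotopy A 1 = lapBar A := by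
  rw [lapBarHomotopy, one_smul, lapBar]

lemma lapBarHomotopy_mulVec_apply (t : ℝ) (x : Fin n → ℝ) (k : Fin n) :
    (lapBarHomotopy A t *ᵥ x) k = ∑ j, |A k j| * (x k - t * x j) := by
  rw [lapBarHomotopy, sub_mulVec, Pi.sub_apply, mulVec_diagonal, smul_mulVec, Pi.smul_apply,
    inDeg, Finset.sum_mul, smul_eq_mul, mulVec, dotProduct, Finset.mul_sum,
    ← Finset.sum_sub_distrib]
  exact Finset.sum_congr rfl fun j _ => by simp only [of_apply]; ring

lemma lapBar_mulVec_apply (x : Fin n → ℝ) (k : Fin n) :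
    (lapBar A *ᵥ x) k = ∑ j, |A k j| * (x k - x j) := by
  simp only [← lapBarHomotopy_one, lapBarHomotopy_mulVec_apply, one_mul]

lemma lapOf_mulVec_apply (x : Fin n → ℝ) (k : Fin n) :
    (lapOf A *ᵥ x) k = ∑ j, (|A k j| * x k - A k j * x j) := by
  rw [lapOf, sub_mulVec, Pi.sub_apply, mulVec_diagonal, inDeg, Finset.sum_mul, mulVec, dotProduct,
    Finset.sum_sub_distrib]

lemma lapBar_mulVec_const (c : ℝ) : lapBar A *ᵥ (fun _ => c) = 0 := by
  ext k
  simp [lapBar_mulVec_apply]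

lemma det_lapBar [NeZero n] : (lapBar A).det = 0 :=
  exists_mulVec_eq_zero_iff.mp ⟨fun _ => 1, Function.ne_iff.mpr ⟨0, one_ne_zero⟩,
    lapBar_mulVec_const A 1⟩

variable {A}

lemma inDeg_pos_of_ne_zero {k j : Fin n} (h : A k j ≠ 0) : 0 < inDeg A k :=
  (abs_pos.mpr h).trans_le <|
    Finset.single_le_sum (f := fun j => |A k j|) (fun _ _ => abs_nonneg _) (Finset.mem_univ j)

lemma StronglyConnected.inDeg_pos (hn : 2 ≤ n) (hsc : StronglyConnected A) (k : Fin n) :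
    0 < inDeg A k := by
  have : Nontrivial (Fin n) := Fin.nontrivial_iff_two_le.mpr hn
  obtain ⟨j, hj⟩ := exists_ne k
  cases hsc j k hj with
  | single h => exact inDeg_pos_of_ne_zero h
  | tail _ h => exact inDeg_pos_of_ne_zero h

end Laplacians

section MaximumPrinciple

variable {n : ℕ} {A : Matrix (Fin n) (Fin n) ℝ} {x : Fin n → ℝ}

lemma eq_of_lapBar_mulVec_apply_eq_zero {k j : Fin n} (hk : (lapBar A *ᵥ x) k = 0)
    (hmax : ∀ l, x l ≤ x k) (hkj : A k j ≠ 0) : x j = x k := by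
  rw [lapBar_mulVec_apply] at hk
  have hterm := (Fintype.sum_eq_zero_iff_of_nonneg
    fun l => mul_nonneg (abs_nonneg (A k l)) (sub_nonneg.mpr (hmax l))).mp hk
  have := (mul_eq_zero.mp (congrFun hterm j)).resolve_left (abs_ne_zero.mpr hkj)
  linarith

lemma apply_eq_of_transGen {m : ℝ} {u v : Fin n} (hmax : ∀ l, x l ≤ m)
    (hharm : ∀ k, k ≠ u → (lapBar A *ᵥ x) k = 0)
    (huv : Relation.TransGen (fun a b => A b a ≠ 0) u v) (hv : x v = m) : x u = m := by
  have step : ∀ a b, A b a ≠ 0 → b ≠ u → x b = m → x a = m := fun a b hab hbu hb =>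
    (eq_of_lapBar_mulVec_apply_eq_zero (hharm b hbu) (hb ▸ hmax) hab).trans hb
  induction huv with
  | single h => exact (eq_or_ne _ u).elim (fun h' => h' ▸ hv) fun h' => step _ _ h h' hv
  | tail _ h ih => exact (eq_or_ne _ u).elim (fun h' => h' ▸ hv) fun h' => ih (step _ _ h h' hv)

lemma StronglyConnected.eq_of_lapBar_mulVec_eq_zero (hsc : StronglyConnected A)
    (hx : lapBar A *ᵥ x = 0) (p q : Fin n) : x p = x q := by
  have : Nonempty (Fin n) := ⟨p⟩
  obtain ⟨r, hr⟩ := Finite.exists_max x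
  have hall : ∀ u, x u = x r := fun u =>
    (eq_or_ne u r).elim (fun h => h ▸ rfl) fun h =>
      apply_eq_of_transGen hr (fun k _ => congrFun hx k) (hsc u r h) rfl
  rw [hall p, hall q]

end MaximumPrinciple

section MinorDet

variable {n : ℕ} {A : Matrix (Fin n) (Fin n) ℝ}

/-- At a positive maximum of `y` the row equation fails: for `t < 1` by strict diagonal dominance,
for `t = 1` because the maximum would propagate back along a path to `i`, where `y i = 0`. -/
lemma StronglyConnected.nonpos_of_lapBarHomotopy_mulVec (hn : 2 ≤ n)
    (hsc : StronglyConnected A) {t : ℝ} (ht₀ : 0 ≤ t) (ht₁ : t ≤ 1) {i : Fin n}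
    {y : Fin n → ℝ} (hyi : y i = 0) (hy : ∀ k, k ≠ i → (lapBarHomotopy A t *ᵥ y) k = 0)
    (j : Fin n) : y j ≤ 0 := by
  have : Nonempty (Fin n) := ⟨i⟩
  obtain ⟨p, hp⟩ := Finite.exists_max y
  by_contra! hj
  have hmpos : 0 < y p := hj.trans_le (hp j)
  have hpi : p ≠ i := fun h => hmpos.ne' (h ▸ hyi)
  rcases ht₁.lt_or_eq with ht | rfl
  · have hrow := hy p hpi
    rw [lapBarHomotopy_mulVec_apply] at hrow
    have hlower : (1 - t) * y p * inDeg A p ≤ ∑ l, |A p l| * (y p - t * y l) := by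
      rw [inDeg, Finset.mul_sum]
      refine Finset.sum_le_sum fun l _ => ?_
      nlinarith [mul_nonneg (mul_nonneg (abs_nonneg (A p l)) ht₀) (sub_nonneg.mpr (hp l))]
    have := mul_pos (mul_pos (sub_pos.mpr ht) hmpos) (hsc.inDeg_pos hn p)
    linarith
  · rw [lapBarHomotopy_one] at hy
    have := apply_eq_of_transGen hp hy (hsc i p hpi.symm) rfl
    linarith

lemma StronglyConnected.lapBarHomotopy_submatrix_mulVec_eq_zero (hn : 2 ≤ n)
    (hsc : StronglyConnected A) {t : ℝ} (ht₀ : 0 ≤ t) (ht₁ : t ≤ 1) {i : Fin n}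
    {v : {j : Fin n // j ≠ i} → ℝ}
    (hv : (lapBarHomotopy A t).submatrix (Subtype.val : {j : Fin n // j ≠ i} → Fin n)
      Subtype.val *ᵥ v = 0) : v = 0 := by
  set y : Fin n → ℝ := fun j => if h : j = i then 0 else v ⟨j, h⟩ with hy
  have hker : ∀ k, k ≠ i → (lapBarHomotopy A t *ᵥ y) k = 0 := fun k hk => by
    rw [← submatrix_ne_mulVec_apply _ v ⟨k, hk⟩, hv, Pi.zero_apply]
  have hyi : y i = 0 := dif_pos rfl
  have hle := hsc.nonpos_of_lapBarHomotopy_mulVec hn ht₀ ht₁ hyi hker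
  have hge := hsc.nonpos_of_lapBarHomotopy_mulVec hn ht₀ ht₁ (y := -y)
    (by rw [Pi.neg_apply, hyi, neg_zero])
    fun k hk => by rw [mulVec_neg, Pi.neg_apply, hker k hk, neg_zero]
  ext ⟨j, hj⟩
  have := le_antisymm (hle j) (neg_nonpos.mp (hge j))
  simpa [hy, hj] using this

lemma StronglyConnected.minorDet_pos (hn : 2 ≤ n) (hsc : StronglyConnected A) (i : Fin n) :
    0 < minorDet A i := by
  set f : ℝ → ℝ := fun t => ((lapBarHomotopy A t).submatrix
    (Subtype.val : {j : Fin n // j ≠ i} → Fin n) Subtype.val).det with hf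
  have hcont : Continuous f := by
    simp only [hf, lapBarHomotopy]
    fun_prop
  have hf₀ : 0 < f 0 := by
    simp only [hf, lapBarHomotopy, zero_smul, sub_zero,
      submatrix_diagonal _ _ Subtype.val_injective, det_diagonal]
    exact Finset.prod_pos fun k _ => hsc.inDeg_pos hn k
  have hne : ∀ t ∈ Set.Icc (0 : ℝ) 1, f t ≠ 0 := fun t ht hdet => by
    obtain ⟨v, hv0, hv⟩ := exists_mulVec_eq_zero_iff.mpr hdet
    exact hv0 (hsc.lapBarHomotopy_submatrix_mulVec_eq_zero hn ht.1 ht.2 hv)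
  have hf₁ : f 1 = minorDet A i := by simp only [hf, lapBarHomotopy_one]; rfl
  by_contra! h
  obtain ⟨t, ht, hft⟩ := intermediate_value_Icc' zero_le_one hcont.continuousOn
    ⟨hf₁ ▸ h, hf₀.le⟩
  exact hne t ht hft

end MinorDet

section WeightedBalance

variable {n : ℕ} {A : Matrix (Fin n) (Fin n) ℝ}

/-- The columns of `adj L̄` lie in `ker L̄`, which consists of the constant vectors. -/
lemma StronglyConnected.adjugate_lapBar_apply (hn : 0 < n) (hsc : StronglyConnected A)
    (k j : Fin n) : (lapBar A).adjugate k j = minorDet A j := by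
  obtain ⟨m, rfl⟩ : ∃ m, n = m + 1 := ⟨n - 1, by omega⟩
  have hcol : lapBar A *ᵥ (fun k => (lapBar A).adjugate k j) = 0 := by
    ext q
    simpa [det_lapBar, mul_apply, mulVec, dotProduct] using
      congrFun (congrFun (mul_adjugate (lapBar A)) q) j
  rw [hsc.eq_of_lapBar_mulVec_eq_zero hcol k j, adjugate_apply_self_eq_det_submatrix_ne]
  rfl

lemma StronglyConnected.minorDet_vecMul_lapBar (hn : 0 < n) (hsc : StronglyConnected A) :
    minorDet A ᵥ* lapBar A = 0 := by
  have : NeZero n := ⟨hn.ne'⟩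
  have hrow : minorDet A = (lapBar A).adjugate 0 :=
    funext fun j => (hsc.adjugate_lapBar_apply hn 0 j).symm
  ext j
  simp [hrow, vecMul, dotProduct, ← mul_apply, adjugate_mul, det_lapBar]

end WeightedBalance

section QuadraticForm

variable {n : ℕ} (A : Matrix (Fin n) (Fin n) ℝ)

lemma mirrorLap_eq : mirrorLap A = (1 / 2 : ℝ) • (Wmat A * lapOf A + (Wmat A * lapOf A)ᵀ) := by
  rw [mirrorLap, transpose_mul, Wmat, diagonal_transpose]

lemma dotProduct_mirrorLap_mulVec (x : Fin n → ℝ) :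
    x ⬝ᵥ (mirrorLap A *ᵥ x) = ∑ i, ∑ j, minorDet A i * (|A i j| * x i ^ 2 - A i j * x i * x j) := by
  rw [mirrorLap_eq, smul_mulVec, add_mulVec, dotProduct_smul, dotProduct_add,
    dotProduct_transpose_mulVec, ← two_mul, smul_eq_mul, ← mul_assoc, one_div,
    inv_mul_cancel₀ two_ne_zero, one_mul, ← mulVec_mulVec, Wmat]
  simp only [dotProduct, mulVec_diagonal, lapOf_mulVec_apply, Finset.mul_sum]
  exact Finset.sum_congr rfl fun i _ => Finset.sum_congr rfl fun j _ => by ring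

variable {A}

/-- `Φ_e` exceeds `2 xᵀL̂x` by `-(wᵀ L̄ x²)`, which vanishes because `wᵀ L̄ = 0`. -/
lemma StronglyConnected.two_mul_dotProduct_mirrorLap_mulVec (hn : 0 < n)
    (hsc : StronglyConnected A) (x : Fin n → ℝ) :
    2 * (x ⬝ᵥ (mirrorLap A *ᵥ x)) = PhiE A x := by
  have hbal : ∑ i, ∑ j, minorDet A i * (|A i j| * (x j ^ 2 - x i ^ 2)) = 0 := by
    have h : minorDet A ⬝ᵥ (lapBar A *ᵥ fun j => x j ^ 2) = 0 := by
      rw [dotProduct_mulVec, hsc.minorDet_vecMul_lapBar hn, zero_dotProduct]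
    simp only [dotProduct, lapBar_mulVec_apply, Finset.mul_sum] at h
    rw [← neg_eq_zero, ← h, ← Finset.sum_neg_distrib]
    refine Finset.sum_congr rfl fun i _ => ?_
    rw [← Finset.sum_neg_distrib]
    exact Finset.sum_congr rfl fun j _ => by ring
  simp only [PhiE, mul_assoc, abs_mul_sub_sign_mul_sq, mul_add, Finset.sum_add_distrib, hbal,
    add_zero, dotProduct_mirrorLap_mulVec, Finset.mul_sum]
  exact Finset.sum_congr rfl fun i _ => Finset.sum_congr rfl fun j _ => by ring

lemma StronglyConnected.PhiE_nonneg (hn : 2 ≤ n) (hsc : StronglyConnected A) (x : Fin n → ℝ) :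
    0 ≤ PhiE A x :=
  Finset.sum_nonneg fun i _ => Finset.sum_nonneg fun j _ => by
    have := hsc.minorDet_pos hn i
    positivity

lemma StronglyConnected.mirrorLap_posSemidef (hn : 2 ≤ n) (hsc : StronglyConnected A) :
    (mirrorLap A).PosSemidef := by
  refine posSemidef_iff_dotProduct_mulVec.mpr ⟨?_, fun x => ?_⟩
  · rw [IsHermitian, conjTranspose_eq_transpose_of_trivial, mirrorLap_eq, transpose_smul,
      transpose_add, transpose_transpose, add_comm]
  · have := hsc.two_mul_dotProduct_mirrorLap_mulVec (by omega) x
    rw [star_trivial]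
    linarith [hsc.PhiE_nonneg hn x]

end QuadraticForm

section Balance

variable {n : ℕ} {A : Matrix (Fin n) (Fin n) ℝ}

def IsBipartiteConsensus (A : Matrix (Fin n) (Fin n) ℝ) (x : Fin n → ℝ) : Prop :=
  ∀ i j, A i j ≠ 0 → x i = Real.sign (A i j) * x j

lemma StronglyConnected.PhiE_eq_zero_iff (hn : 2 ≤ n) (hsc : StronglyConnected A)
    (x : Fin n → ℝ) : PhiE A x = 0 ↔ IsBipartiteConsensus A x := by
  have hw := hsc.minorDet_pos hn
  have hterm : ∀ i j, 0 ≤ minorDet A i * |A i j| * (x i - Real.sign (A i j) * x j) ^ 2 :=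
    fun i j => by have := hw i; positivity
  rw [PhiE, Fintype.sum_eq_zero_iff_of_nonneg fun i => Finset.sum_nonneg fun j _ => hterm i j,
    funext_iff, IsBipartiteConsensus]
  refine forall_congr' fun i => ?_
  rw [Pi.zero_apply, Fintype.sum_eq_zero_iff_of_nonneg (hterm i), funext_iff]
  refine forall_congr' fun j => ?_
  simp [(hw i).ne', sub_eq_zero, or_iff_not_imp_left]

lemma StronglyConnected.mirrorLap_mulVec_eq_zero_iff (hn : 2 ≤ n) (hsc : StronglyConnected A)
    (x : Fin n → ℝ) : mirrorLap A *ᵥ x = 0 ↔ IsBipartiteConsensus A x := by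
  rw [← (hsc.mirrorLap_posSemidef hn).dotProduct_mulVec_zero_iff, star_trivial,
    ← hsc.PhiE_eq_zero_iff hn, ← hsc.two_mul_dotProduct_mirrorLap_mulVec (by omega),
    mul_eq_zero, or_iff_right two_ne_zero]

lemma IsBipartiteConsensus.abs_eq (hsc : StronglyConnected A) {x : Fin n → ℝ}
    (hx : IsBipartiteConsensus A x) (p q : Fin n) : |x p| = |x q| := by
  have hpath : ∀ {q}, Relation.TransGen (fun a b => A b a ≠ 0) p q → |x q| = |x p| := by
    intro q hpq
    induction hpq with
    | single h => rw [hx _ _ h, abs_mul, Real.abs_sign_of_ne_zero h, one_mul]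
    | tail _ h ih => rw [hx _ _ h, abs_mul, Real.abs_sign_of_ne_zero h, one_mul, ih]
  rcases eq_or_ne p q with rfl | hpq
  · rfl
  · exact (hpath (hsc p q hpq)).symm

lemma StronglyConnected.structBalanced_iff (hn : 0 < n) (hsc : StronglyConnected A) :
    StructBalanced A ↔ ∃ x ≠ 0, IsBipartiteConsensus A x := by
  constructor
  · rintro ⟨σ, hσ, hpos⟩
    refine ⟨σ, fun h => by simpa [h] using hσ ⟨0, hn⟩, fun i j hij => ?_⟩
    have := hpos i j
    rcases hij.lt_or_gt with ha | ha <;>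
      simp only [Real.sign_of_neg, Real.sign_of_pos, ha] <;>
      rcases hσ i with hi | hi <;> rcases hσ j with hj | hj <;>
      simp only [hi, hj] at this ⊢ <;> nlinarith
  · rintro ⟨x, hx0, hx⟩
    obtain ⟨k, hk⟩ := Function.ne_iff.mp hx0
    have hc : 0 < |x k| := abs_pos.mpr hk
    refine ⟨fun i => x i / |x k|, fun i => ?_, fun i j => ?_⟩
    · rcases (abs_eq hc.le).mp (hx.abs_eq hsc i k) with h | h
      · exact Or.inl (show x i / |x k| = 1 by rw [h, div_self hc.ne'])
      · exact Or.inr (show x i / |x k| = -1 by rw [h, neg_div, div_self hc.ne'])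
    · rcases eq_or_ne (A i j) 0 with h | h
      · simp [h]
      · have : x i / |x k| * A i j * (x j / |x k|)
            = Real.sign (A i j) * A i j * (x j / |x k|) ^ 2 := by
          rw [hx i j h]; ring
        rw [this, Real.sign_mul_self]
        positivity

end Balance

theorem unbalanced_iff_nullspace_trivial_general (n : ℕ) (hn : 2 ≤ n)
    (A : Matrix (Fin n) (Fin n) ℝ)
    (hsc : StronglyConnected A) :
    ¬ StructBalanced A ↔ ∀ x : Fin n → ℝ, mirrorLap A *ᵥ x = 0 → x = 0 := by
  simp only [hsc.structBalanced_iff (by omega), hsc.mirrorLap_mulVec_eq_zero_iff hn, not_exists,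
    not_and, not_imp_not]

/-- `G` is structurally unbalanced iff the null space of `L̂` is trivial. -/
theorem unbalanced_iff_nullspace_trivial (n : ℕ) (hn : 2 ≤ n)
    (A : Matrix (Fin n) (Fin n) ℝ)
    (hdiag : ∀ i, A i i = 0) (hdigon : ∀ i j, 0 ≤ A i j * A j i)
    (hsc : StronglyConnected A) :
    ¬ StructBalanced A ↔ ∀ x : Fin n → ℝ, mirrorLap A *ᵥ x = 0 → x = 0 :=
  unbalanced_iff_nullspace_trivial_general n hn A hsc
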